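/- Let ℓ be an odd prime, n = (ℓ−1)/2, ζ = ζ_ℓ, ρ = (ζ − ζ^{-1})/ℓ, and define the pairing E(α, β) = Tr_{k/ℚ}(ρ·α·conj(β)) for α, β ∈ k = ℚ(ζ). With the basis e_i = ζ^{2i} (1 ≤ i ≤ n) and e_{n+j} = Σ_{t=1}^{j} ζ^{2t−1} (1 ≤ j ≤ n), the Gram matrix (E(e_i, e_j))_{1≤i,j≤2n} equals the standard symplectic matrix J = [[0, −1_n],[1_n, 0]]. -/

import Mathlib

/-!
For `m : ℤ`, `Tr(ζ ^ m)` is `ℓ - 1` when `ℓ ∣ m` and `-1` otherwise: all primitive `ℓ`-th roots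
share the minimal polynomial `Φ_ℓ`, and the `ℓ`-th roots of unity sum to `0`. Multiplying by
`ζ - ζ⁻¹` telescopes the odd partial sums, `(ζ - ζ⁻¹) ∑_{t ≤ j} ζ ^ (2t+1) = ζ ^ (2(j+1)) - 1`,
so every Gram entry becomes `ℓ⁻¹` times a difference of traces `Tr(ζ ^ p * ζ⁻¹ ^ q)` with
`p, q < ℓ`; these are `-1` except on the diagonal `p = q`.
-/

open Finset

theorem IsPrimitiveRoot.isCyclotomicExtension_of_adjoin_eq_top {A B : Type*} [CommRing A]
    [CommRing B] [Algebra A B] {ζ : B} {n : ℕ} [NeZero n] (hζ : IsPrimitiveRoot ζ n)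
    (h : Algebra.adjoin A ({ζ} : Set B) = ⊤) : IsCyclotomicExtension {n} A B :=
  haveI := hζ.adjoin_isCyclotomicExtension A
  IsCyclotomicExtension.equiv {n} A _ ((Subalgebra.equivOfEq _ _ h).trans Subalgebra.topEquiv)

theorem Algebra.trace_div_natCast {K : Type*} [Field K] [CharZero K] (x : K) (m : ℕ) :
    Algebra.trace ℚ K (x / m) = Algebra.trace ℚ K x / m := by
  rw [div_eq_inv_mul, ← map_natCast (algebraMap ℚ K), ← map_inv₀, ← Algebra.smul_def, map_smul,
    smul_eq_mul, inv_mul_eq_div]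

theorem mul_sum_range_odd_pow {F : Type*} [Field F] {x : F} (hx : x ≠ 0) (j : ℕ) :
    (x - x⁻¹) * ∑ t ∈ range j, x ^ (2 * t + 1) = x ^ (2 * j) - 1 := by
  have hterm (t : ℕ) : (x - x⁻¹) * x ^ (2 * t + 1) = x ^ (2 * (t + 1)) - x ^ (2 * t) := by
    field_simp; ring
  simp only [mul_sum, hterm, sum_range_sub (fun t => x ^ (2 * t)), mul_zero, pow_zero]

section Trace

variable {K : Type*} [Field K] [CharZero K]

theorem IsPrimitiveRoot.trace_eq_trace {n : ℕ} [NeZero n] [IsCyclotomicExtension {n} ℚ K]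
    {μ η : K} (hμ : IsPrimitiveRoot μ n) (hη : IsPrimitiveRoot η n) :
    Algebra.trace ℚ K μ = Algebra.trace ℚ K η := by
  rw [← hμ.powerBasis_gen ℚ, ← hη.powerBasis_gen ℚ, PowerBasis.trace_gen_eq_nextCoeff_minpoly,
    PowerBasis.trace_gen_eq_nextCoeff_minpoly]
  simp only [IsPrimitiveRoot.powerBasis_gen]
  rw [← Polynomial.cyclotomic_eq_minpoly_rat hμ (NeZero.pos n),
    ← Polynomial.cyclotomic_eq_minpoly_rat hη (NeZero.pos n)]

theorem IsCyclotomicExtension.trace_one_of_prime (ℓ : ℕ) [hℓ : Fact ℓ.Prime]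
    [IsCyclotomicExtension {ℓ} ℚ K] : Algebra.trace ℚ K 1 = ℓ - 1 := by
  rw [← map_one (algebraMap ℚ K), Algebra.trace_algebraMap,
    IsCyclotomicExtension.finrank K (Polynomial.cyclotomic.irreducible_rat hℓ.out.pos),
    Nat.totient_prime hℓ.out, nsmul_one, Nat.cast_pred hℓ.out.pos]

variable {ℓ : ℕ} [hℓ : Fact ℓ.Prime] [IsCyclotomicExtension {ℓ} ℚ K] {ζ : K}

theorem IsPrimitiveRoot.trace_zpow_eq_trace (hζ : IsPrimitiveRoot ζ ℓ) {m : ℤ}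
    (hm : ¬ (ℓ : ℤ) ∣ m) : Algebra.trace ℚ K (ζ ^ m) = Algebra.trace ℚ K ζ := by
  refine (hζ.zpow_of_gcd_eq_one m ?_).trace_eq_trace hζ
  exact Int.isCoprime_iff_gcd_eq_one.1
    ((Prime.coprime_iff_not_dvd (Nat.prime_iff_prime_int.1 hℓ.out)).2 hm).symm

theorem IsPrimitiveRoot.trace_eq_neg_one (hζ : IsPrimitiveRoot ζ ℓ) :
    Algebra.trace ℚ K ζ = -1 := by
  have hpow (i : ℕ) (hi : i < ℓ - 1) : Algebra.trace ℚ K (ζ ^ (i + 1)) = Algebra.trace ℚ K ζ := by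
    rw [← zpow_natCast]
    refine hζ.trace_zpow_eq_trace fun hd => ?_
    have := Int.le_of_dvd (by omega) hd
    omega
  have hsum : ∑ i ∈ range (ℓ - 1), Algebra.trace ℚ K (ζ ^ (i + 1)) + Algebra.trace ℚ K 1 = 0 := by
    rw [← pow_zero ζ, ← map_sum, ← map_add, ← sum_range_succ', Nat.sub_add_cancel hℓ.out.one_le,
      hζ.geom_sum_eq_zero hℓ.out.one_lt, map_zero]
  rw [sum_congr rfl fun i hi => hpow i (mem_range.1 hi), sum_const, card_range, nsmul_eq_mul,
    IsCyclotomicExtension.trace_one_of_prime ℓ, Nat.cast_pred hℓ.out.pos] at hsum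
  have hℓ1 : (ℓ : ℚ) - 1 ≠ 0 := sub_ne_zero.2 (by exact_mod_cast hℓ.out.one_lt.ne')
  have : ((ℓ : ℚ) - 1) * (Algebra.trace ℚ K ζ + 1) = 0 := by linear_combination hsum
  exact eq_neg_of_add_eq_zero_left ((mul_eq_zero.1 this).resolve_left hℓ1)

theorem IsPrimitiveRoot.trace_pow_mul_inv_pow (hζ : IsPrimitiveRoot ζ ℓ) {p q : ℕ} (hp : p < ℓ)
    (hq : q < ℓ) :
    Algebra.trace ℚ K (ζ ^ p * ζ⁻¹ ^ q) = if p = q then (ℓ : ℚ) - 1 else -1 := by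
  split_ifs with h
  · rw [h, ← mul_pow, mul_inv_cancel₀ (hζ.ne_zero hℓ.out.ne_zero), one_pow,
      IsCyclotomicExtension.trace_one_of_prime ℓ]
  · have hndvd : ¬ (ℓ : ℤ) ∣ (p - q : ℤ) := fun hd =>
      h (by have := Int.eq_zero_of_abs_lt_dvd hd (by rw [abs_lt]; omega); omega)
    rw [inv_pow, ← div_eq_mul_inv, ← zpow_natCast, ← zpow_natCast,
      ← zpow_sub₀ (hζ.ne_zero hℓ.out.ne_zero), hζ.trace_zpow_eq_trace hndvd, hζ.trace_eq_neg_one]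

end Trace

section Gram

variable {K : Type*} [Field K] [CharZero K] {ℓ : ℕ} [hℓ : Fact ℓ.Prime]
  [IsCyclotomicExtension {ℓ} ℚ K] {ζ : K} (hζ : IsPrimitiveRoot ζ ℓ) {a b : ℕ}
  (ha : 2 * a + 2 < ℓ) (hb : 2 * b + 2 < ℓ)
include hζ ha hb

theorem IsPrimitiveRoot.trace_evenPow_evenPow :
    Algebra.trace ℚ K ((ζ - ζ⁻¹) / ℓ * ζ ^ (2 * (a + 1)) * ζ⁻¹ ^ (2 * (b + 1))) = 0 := by
  have hζ0 := hζ.ne_zero hℓ.out.ne_zero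
  have : (ζ - ζ⁻¹) / ℓ * ζ ^ (2 * (a + 1)) * ζ⁻¹ ^ (2 * (b + 1)) =
      (ζ ^ (2 * a + 2) * ζ⁻¹ ^ (2 * b + 1) - ζ ^ (2 * a + 1) * ζ⁻¹ ^ (2 * b + 2)) / ℓ := by
    simp only [inv_pow]
    field_simp
    ring
  rw [this, Algebra.trace_div_natCast, map_sub, hζ.trace_pow_mul_inv_pow (by omega) (by omega),
    hζ.trace_pow_mul_inv_pow (by omega) (by omega), if_neg (by omega), if_neg (by omega),
    sub_self, zero_div]

theorem IsPrimitiveRoot.trace_evenPow_oddSum :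
    Algebra.trace ℚ K ((ζ - ζ⁻¹) / ℓ * ζ ^ (2 * (a + 1)) *
      ∑ t ∈ range (b + 1), ζ⁻¹ ^ (2 * t + 1)) = if a = b then -1 else 0 := by
  have htel := mul_sum_range_odd_pow (inv_ne_zero (hζ.ne_zero hℓ.out.ne_zero)) (b + 1)
  rw [inv_inv] at htel
  have : (ζ - ζ⁻¹) / ℓ * ζ ^ (2 * (a + 1)) * ∑ t ∈ range (b + 1), ζ⁻¹ ^ (2 * t + 1) =
      (ζ ^ (2 * a + 2) * ζ⁻¹ ^ 0 - ζ ^ (2 * a + 2) * ζ⁻¹ ^ (2 * b + 2)) / ℓ := by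
    linear_combination (-ζ ^ (2 * (a + 1)) / ℓ) * htel
  have hℓ0 : (ℓ : ℚ) ≠ 0 := Nat.cast_ne_zero.2 hℓ.out.ne_zero
  rw [this, Algebra.trace_div_natCast, map_sub, hζ.trace_pow_mul_inv_pow (by omega) (by omega),
    hζ.trace_pow_mul_inv_pow (by omega) (by omega), if_neg (by omega)]
  obtain rfl | hab := eq_or_ne a b
  · rw [if_pos rfl, if_pos rfl]
    field_simp
    ring
  · rw [if_neg (by omega), if_neg hab, sub_self, zero_div]

theorem IsPrimitiveRoot.trace_oddSum_evenPow :
    Algebra.trace ℚ K ((ζ - ζ⁻¹) / ℓ * (∑ t ∈ range (a + 1), ζ ^ (2 * t + 1)) *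
      ζ⁻¹ ^ (2 * (b + 1))) = if a = b then 1 else 0 := by
  have htel := mul_sum_range_odd_pow (hζ.ne_zero hℓ.out.ne_zero) (a + 1)
  have : (ζ - ζ⁻¹) / ℓ * (∑ t ∈ range (a + 1), ζ ^ (2 * t + 1)) * ζ⁻¹ ^ (2 * (b + 1)) =
      (ζ ^ (2 * a + 2) * ζ⁻¹ ^ (2 * b + 2) - ζ ^ 0 * ζ⁻¹ ^ (2 * b + 2)) / ℓ := by
    linear_combination (ζ⁻¹ ^ (2 * (b + 1)) / ℓ) * htel
  have hℓ0 : (ℓ : ℚ) ≠ 0 := Nat.cast_ne_zero.2 hℓ.out.ne_zero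
  rw [this, Algebra.trace_div_natCast, map_sub, hζ.trace_pow_mul_inv_pow (by omega) (by omega),
    hζ.trace_pow_mul_inv_pow (by omega) (by omega), if_neg (by omega : 0 ≠ 2 * b + 2)]
  obtain rfl | hab := eq_or_ne a b
  · rw [if_pos rfl, if_pos rfl]
    field_simp
    ring
  · rw [if_neg (by omega), if_neg hab, sub_self, zero_div]

theorem IsPrimitiveRoot.trace_oddSum_oddSum :
    Algebra.trace ℚ K ((ζ - ζ⁻¹) / ℓ * (∑ t ∈ range (a + 1), ζ ^ (2 * t + 1)) *
      ∑ t ∈ range (b + 1), ζ⁻¹ ^ (2 * t + 1)) = 0 := by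
  have htel := mul_sum_range_odd_pow (hζ.ne_zero hℓ.out.ne_zero) (a + 1)
  have : (ζ - ζ⁻¹) / ℓ * (∑ t ∈ range (a + 1), ζ ^ (2 * t + 1)) *
      ∑ t ∈ range (b + 1), ζ⁻¹ ^ (2 * t + 1) =
      (∑ t ∈ range (b + 1), ζ ^ (2 * a + 2) * ζ⁻¹ ^ (2 * t + 1) -
        ∑ t ∈ range (b + 1), ζ ^ 0 * ζ⁻¹ ^ (2 * t + 1)) / ℓ := by
    rw [← mul_sum, ← mul_sum]
    linear_combination (∑ t ∈ range (b + 1), ζ⁻¹ ^ (2 * t + 1)) / ℓ * htel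
  have hsum (p : ℕ) (hp : p < ℓ) (hpar : p % 2 = 0) :
      Algebra.trace ℚ K (∑ t ∈ range (b + 1), ζ ^ p * ζ⁻¹ ^ (2 * t + 1)) =
        ∑ t ∈ range (b + 1), (-1 : ℚ) := by
    rw [map_sum]
    refine sum_congr rfl fun t ht => ?_
    rw [mem_range] at ht
    rw [hζ.trace_pow_mul_inv_pow hp (by omega), if_neg (by omega)]
  rw [this, Algebra.trace_div_natCast, map_sub, hsum _ (by omega) (by omega),
    hsum 0 (by omega) rfl, sub_self, zero_div]

end Gram

theorem stmt19_general (ℓ n : ℕ) (hℓ : ℓ.Prime) (hn : n = (ℓ - 1) / 2)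
    (K : Type*) [Field K] [NumberField K] (ζ : K) (hζ : IsPrimitiveRoot ζ ℓ)
    (hgen : Algebra.adjoin ℚ ({ζ} : Set K) = ⊤)
    (c : K ≃ₐ[ℚ] K) (hc : c ζ = ζ⁻¹)
    (ρ : K) (hρ : ρ = (ζ - ζ⁻¹) / ℓ)
    (e : Fin n ⊕ Fin n → K)
    (he1 : ∀ i : Fin n, e (Sum.inl i) = ζ ^ (2 * ((i : ℕ) + 1)))
    (he2 : ∀ j : Fin n, e (Sum.inr j) =
      ∑ t ∈ Finset.range ((j : ℕ) + 1), ζ ^ (2 * t + 1)) :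
    (Matrix.of fun i j : Fin n ⊕ Fin n => Algebra.trace ℚ K (ρ * e i * c (e j))) =
      Matrix.fromBlocks 0 (-1) 1 0 := by
  have := Fact.mk hℓ
  have := hζ.isCyclotomicExtension_of_adjoin_eq_top hgen
  have hbound (i : Fin n) : 2 * (i : ℕ) + 2 < ℓ := by omega
  subst hρ
  ext (i | i) (j | j)
  · simp only [Matrix.of_apply, Matrix.fromBlocks_apply₁₁, he1, map_pow, hc]
    exact hζ.trace_evenPow_evenPow (hbound i) (hbound j)
  · simp only [Matrix.of_apply, Matrix.fromBlocks_apply₁₂, he1, he2, map_sum, map_pow, hc,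
      hζ.trace_evenPow_oddSum (hbound i) (hbound j), Matrix.neg_apply, Matrix.one_apply,
      Fin.val_inj, neg_ite, neg_zero]
  · simp only [Matrix.of_apply, Matrix.fromBlocks_apply₂₁, he1, he2, map_pow, hc,
      hζ.trace_oddSum_evenPow (hbound i) (hbound j), Matrix.one_apply, Fin.val_inj]
  · simp only [Matrix.of_apply, Matrix.fromBlocks_apply₂₂, he2, map_sum, map_pow, hc]
    exact hζ.trace_oddSum_oddSum (hbound i) (hbound j)

/-- Let `ℓ` be an odd prime, `n = (ℓ−1)/2`, `ζ = ζ_ℓ`, `ρ = (ζ − ζ^{-1})/ℓ`, and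
define the pairing `E(α, β) = Tr_{k/ℚ}(ρ·α·conj(β))` on `k = ℚ(ζ)`. With the basis
`e_i = ζ^{2i}` (`1 ≤ i ≤ n`) and `e_{n+j} = Σ_{t=1}^{j} ζ^{2t−1}` (`1 ≤ j ≤ n`),
the Gram matrix `(E(e_i, e_j))` equals the standard symplectic matrix
`J = [[0, −1_n],[1_n, 0]]`. -/
theorem stmt19 (ℓ n : ℕ) (hℓ : ℓ.Prime) (hℓo : Odd ℓ) (hn : n = (ℓ - 1) / 2)
    (K : Type*) [Field K] [NumberField K] (ζ : K) (hζ : IsPrimitiveRoot ζ ℓ)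
    (hgen : Algebra.adjoin ℚ ({ζ} : Set K) = ⊤)
    (c : K ≃ₐ[ℚ] K) (hc : c ζ = ζ⁻¹)
    (ρ : K) (hρ : ρ = (ζ - ζ⁻¹) / ℓ)
    (e : Fin n ⊕ Fin n → K)
    (he1 : ∀ i : Fin n, e (Sum.inl i) = ζ ^ (2 * ((i : ℕ) + 1)))
    (he2 : ∀ j : Fin n, e (Sum.inr j) =
      ∑ t ∈ Finset.range ((j : ℕ) + 1), ζ ^ (2 * t + 1)) :
    (Matrix.of fun i j : Fin n ⊕ Fin n => Algebra.trace ℚ K (ρ * e i * c (e j))) =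
      Matrix.fromBlocks 0 (-1) 1 0 :=
  stmt19_general ℓ n hℓ hn K ζ hζ hgen c hc ρ hρ e he1 he2
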